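/- arXiv:1502.07045 — 5 statements merged into one kernel-verified Lean document; each statement's English description precedes it below -/
import Mathlib

section
/- Let N = (V, A) be a binary phylogenetic network over a finite leaf set X with root ρ. A subset S ⊆ A is admissible if and only if S is a support tree for N, i.e., the digraph (V, S) is a rooted directed tree with root ρ whose vertices of out-degree 0 are exactly the elements of X. Consequently, N is tree-based if and only if there exists an admissible subset of A, and the identity map S ↦ S is a bijection between the set of admissible subsets of A and the set of support trees for N. -/
/-! Directed multigraphs, walks, and binary phylogenetic networks
(following Francis & Steel, "Which phylogenetic networks are merely
trees with additional arcs?"). -/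

universe u1 u2 u3 u4 u5 u6 u7

/-- In-degree of `v`: the number of arcs with target `v`. -/
noncomputable def InDeg {V : Type u2} {A : Type u3} (t : A → V) (v : V) : ℕ := {a : A | t a = v}.ncard

/-- Out-degree of `v`: the number of arcs with source `v`. -/
noncomputable def OutDeg {V : Type u2} {A : Type u3} (s : A → V) (v : V) : ℕ := {a : A | s a = v}.ncard

/-- In-degree of `v` in the sub-digraph with arc set `A₀`. -/
noncomputable def InDegIn {V : Type u2} {A : Type u3} (t : A → V) (A₀ : Set A) (v : V) : ℕ :=
  {a : A | a ∈ A₀ ∧ t a = v}.ncard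

/-- Out-degree of `v` in the sub-digraph with arc set `A₀`. -/
noncomputable def OutDegIn {V : Type u2} {A : Type u3} (s : A → V) (A₀ : Set A) (v : V) : ℕ :=
  {a : A | a ∈ A₀ ∧ s a = v}.ncard

/-- `ArcWalk s t u p v` : the list of arcs `p` is a directed walk from `u` to `v`
(consecutive arcs are compatible). -/
inductive ArcWalk {V : Type u2} {A : Type u3} (s t : A → V) : V → List A → V → Prop
  | nil (v : V) : ArcWalk s t v [] v
  | cons {u w : V} {a : A} {p : List A} :
      s a = u → ArcWalk s t (t a) p w → ArcWalk s t u (a :: p) w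

/-- The digraph `(V, S)` is a rooted directed tree with root `r`: every vertex of `V`
is reachable from `r` by a unique directed path using only arcs in `S`. -/
def IsRootedTree {V : Type u2} {A : Type u3} (s t : A → V) (S : Set A) (r : V) : Prop :=
  ∀ v : V, ∃! p : List A, (∀ a ∈ p, a ∈ S) ∧ ArcWalk s t r p v

/-- `(V₀, A₀)` is a rooted directed tree with root `r` (as a sub-digraph of the
ambient digraph given by `s`, `t`). -/
def IsRootedTreeOn {V : Type u2} {A : Type u3} (s t : A → V) (V₀ : Set V) (A₀ : Set A)
    (r : V) : Prop :=
  r ∈ V₀ ∧ (∀ a ∈ A₀, s a ∈ V₀ ∧ t a ∈ V₀) ∧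
    ∀ v ∈ V₀, ∃! p : List A, (∀ a ∈ p, a ∈ A₀) ∧ ArcWalk s t r p v

/-- A set of arcs is independent if no two distinct arcs of it share a vertex
(the vertices of an arc `a` being `s a` and `t a`). -/
def IndepArcs {V : Type u2} {A : Type u3} (s t : A → V) (I : Set A) : Prop :=
  ∀ a ∈ I, ∀ b ∈ I, a ≠ b → s a ≠ s b ∧ s a ≠ t b ∧ t a ≠ s b ∧ t a ≠ t b

/-- A binary phylogenetic network over the (finite) leaf set `X`: a finite acyclic
directed multigraph whose out-degree-0 vertices are exactly the (images of the)
elements of `X`, each leaf has in-degree 1, there is a unique in-degree-0 vertex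
(the root) of out-degree 1 or 2, and every other vertex has in-degree 2 and
out-degree 1, or in-degree 1 and out-degree 2. -/
structure PhyloNetwork (X : Type u1) (V : Type u2) (A : Type u3) where
  src : A → V
  tgt : A → V
  leafEmb : X → V
  root : V
  finV : Finite V
  finA : Finite A
  leafEmb_inj : Function.Injective leafEmb
  acyclic : ∀ (v : V) (p : List A), p ≠ [] → ¬ ArcWalk src tgt v p v
  leaf_iff : ∀ v : V, (∃ x : X, leafEmb x = v) ↔ OutDeg src v = 0
  leaf_indeg : ∀ x : X, InDeg tgt (leafEmb x) = 1
  root_indeg : InDeg tgt root = 0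
  root_unique : ∀ v : V, InDeg tgt v = 0 → v = root
  root_outdeg : OutDeg src root = 1 ∨ OutDeg src root = 2
  deg_other : ∀ v : V, v ≠ root → (¬ ∃ x : X, leafEmb x = v) →
    (InDeg tgt v = 2 ∧ OutDeg src v = 1) ∨ (InDeg tgt v = 1 ∧ OutDeg src v = 2)

namespace PhyloNetwork

variable {X : Type u1} {V : Type u2} {A : Type u3}

/-- The set of leaves of the network (the copy of `X` inside `V`). -/
def leaves (N : PhyloNetwork X V A) : Set V := Set.range N.leafEmb

/-- `S ⊆ A` is a support tree for `N`: the digraph `(V, S)` is a rooted directed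
tree with root `N.root` whose out-degree-0 vertices are exactly the leaves. -/
def IsSupportTree (N : PhyloNetwork X V A) (S : Set A) : Prop :=
  IsRootedTree N.src N.tgt S N.root ∧
    ∀ v : V, OutDegIn N.src S v = 0 ↔ v ∈ N.leaves

/-- `N` is tree-based if it has a support tree. -/
def TreeBased (N : PhyloNetwork X V A) : Prop := ∃ S : Set A, N.IsSupportTree S

/-- `S₁`: the arcs whose source has out-degree 1 or whose target has in-degree 1. -/
def S1 (N : PhyloNetwork X V A) : Set A :=
  {a : A | OutDeg N.src (N.src a) = 1 ∨ InDeg N.tgt (N.tgt a) = 1}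

/-- `S` is admissible: it contains `S₁`, every in-degree-2 vertex has exactly one
incoming arc in `S` (C₁), and every out-degree-2 vertex has at least one outgoing
arc in `S` (C₂). -/
def Admissible (N : PhyloNetwork X V A) (S : Set A) : Prop :=
  N.S1 ⊆ S ∧
    (∀ v : V, InDeg N.tgt v = 2 → ∃! a : A, a ∈ S ∧ N.tgt a = v) ∧
    (∀ v : V, OutDeg N.src v = 2 → ∃ a ∈ S, N.src a = v)

/-- An antichain: no directed path from one element to another distinct element. -/
def IsAntichainIn (N : PhyloNetwork X V A) (𝒜 : Set V) : Prop :=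
  ∀ u ∈ 𝒜, ∀ v ∈ 𝒜, u ≠ v → ∀ p : List A, ¬ ArcWalk N.src N.tgt u p v

/-- The antichain-to-leaf property: from every antichain of non-leaf vertices there
is a family of pairwise arc-disjoint directed paths to leaves. -/
def AntichainToLeaf (N : PhyloNetwork X V A) : Prop :=
  ∀ 𝒜 : Set V, (∀ v ∈ 𝒜, v ∉ N.leaves) → N.IsAntichainIn 𝒜 →
    ∃ p : V → List A,
      (∀ v ∈ 𝒜, ∃ w ∈ N.leaves, ArcWalk N.src N.tgt v (p v) w) ∧
      (∀ u ∈ 𝒜, ∀ v ∈ 𝒜, u ≠ v → ∀ a ∈ p u, a ∉ p v)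

end PhyloNetwork

/-- The sub-digraph `(V₀, A₀)` of the digraph given by `s, t` is a subdivision of the
digraph given by `s', t'`, realized by the vertex map `φV`: the vertices of the target
digraph correspond exactly to the vertices of `(V₀, A₀)` that do not have in-degree 1
and out-degree 1, and each target arc corresponds to a directed path of `(V₀, A₀)`
with all internal vertices suppressed, these paths partitioning `A₀`. Equivalently,
the target digraph is obtained from `(V₀, A₀)` by repeatedly suppressing all vertices
of in-degree 1 and out-degree 1. -/
def SubdivOn {V : Type u2} {A : Type u3} {V' : Type u4} {A' : Type u5}
    (s t : A → V) (V₀ : Set V) (A₀ : Set A) (s' t' : A' → V') (φV : V' → V) : Prop :=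
  Function.Injective φV ∧
  (∀ v' : V', φV v' ∈ V₀) ∧
  (∀ a ∈ A₀, s a ∈ V₀ ∧ t a ∈ V₀) ∧
  (∀ v ∈ V₀, v ∈ Set.range φV ↔ ¬ (InDegIn t A₀ v = 1 ∧ OutDegIn s A₀ v = 1)) ∧
  ∃ φA : A' → List A,
    (∀ e : A', φA e ≠ [] ∧ (φA e).Nodup ∧ (∀ a ∈ φA e, a ∈ A₀) ∧
      ArcWalk s t (φV (s' e)) (φA e) (φV (t' e)) ∧
      ∀ a ∈ (φA e).dropLast, t a ∉ Set.range φV) ∧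
    (∀ a ∈ A₀, ∃! e : A', a ∈ φA e)

/-- A rooted binary phylogenetic `X`-tree: a binary phylogenetic network over `X`
with no vertices of in-degree 2. -/
def IsPhyloTree {X : Type u1} {V : Type u2} {A : Type u3}
    (T : PhyloNetwork X V A) : Prop :=
  ∀ v : V, InDeg T.tgt v ≠ 2

/-- `N` is based on the tree `T`: `N` has a support tree `S` such that `(V, S)` is a
subdivision of `T`, matching roots and leaf labels. -/
def BasedOn {X : Type u1} {V : Type u2} {A : Type u3} {V' : Type u4} {A' : Type u5}
    (N : PhyloNetwork X V A) (T : PhyloNetwork X V' A') : Prop :=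
  ∃ (S : Set A) (φV : V' → V),
    N.IsSupportTree S ∧
    SubdivOn N.src N.tgt Set.univ S T.src T.tgt φV ∧
    φV T.root = N.root ∧
    ∀ x : X, φV (T.leafEmb x) = N.leafEmb x

/-- `N` displays the tree `T`: there are `V₀ ⊆ V` and `A₀ ⊆ A` forming a rooted
directed tree whose out-degree-0 vertices are exactly the leaves of `N`, such that
`T` is obtained from `(V₀, A₀)` by repeatedly suppressing vertices of in-degree 1 and
out-degree 1 and deleting the root together with its outgoing arc so long as the root
has out-degree 1 (the deleted root chain is the path `p₀`). -/
def Displays {X : Type u1} {V : Type u2} {A : Type u3} {V' : Type u4} {A' : Type u5}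
    (N : PhyloNetwork X V A) (T : PhyloNetwork X V' A') : Prop :=
  ∃ (V₀ : Set V) (A₀ : Set A) (r₀ : V) (φV : V' → V) (p₀ : List A) (φA : A' → List A),
    IsRootedTreeOn N.src N.tgt V₀ A₀ r₀ ∧
    (∀ v ∈ V₀, OutDegIn N.src A₀ v = 0 ↔ v ∈ N.leaves) ∧
    Function.Injective φV ∧
    (∀ v' : V', φV v' ∈ V₀) ∧
    (∀ x : X, φV (T.leafEmb x) = N.leafEmb x) ∧
    p₀.Nodup ∧ (∀ a ∈ p₀, a ∈ A₀) ∧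
    ArcWalk N.src N.tgt r₀ p₀ (φV T.root) ∧
    (∀ a ∈ p₀, OutDegIn N.src A₀ (N.src a) = 1 ∧ N.src a ∉ Set.range φV) ∧
    (∀ e : A', φA e ≠ [] ∧ (φA e).Nodup ∧ (∀ a ∈ φA e, a ∈ A₀) ∧
      ArcWalk N.src N.tgt (φV (T.src e)) (φA e) (φV (T.tgt e)) ∧
      ∀ a ∈ (φA e).dropLast, N.tgt a ∉ Set.range φV) ∧
    (∀ a ∈ A₀, (a ∈ p₀ ∧ ∀ e : A', a ∉ φA e) ∨ (a ∉ p₀ ∧ ∃! e : A', a ∈ φA e))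

/-- The vertices of `N` having a directed path (possibly trivial) to a vertex in `L`. -/
def KeepV {X : Type u1} {V : Type u2} {A : Type u3}
    (N : PhyloNetwork X V A) (L : Set V) : Set V :=
  {v : V | ∃ (p : List A) (w : V), w ∈ L ∧ ArcWalk N.src N.tgt v p w}

/-- The arcs of `N` lying on a directed path ending at a vertex in `L`. -/
def KeepA {X : Type u1} {V : Type u2} {A : Type u3}
    (N : PhyloNetwork X V A) (L : Set V) : Set A :=
  {a : A | ∃ (p : List A) (w : V), w ∈ L ∧ ArcWalk N.src N.tgt (N.tgt a) p w}


section AuxWalk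
variable {V : Type u2} {A : Type u3} {s t : A → V}

lemma arcwalk_nil_eq {u v : V} (h : ArcWalk s t u [] v) : u = v := by cases h; rfl

lemma arcwalk_append {u v w : V} {p q : List A}
    (h1 : ArcWalk s t u p v) (h2 : ArcWalk s t v q w) : ArcWalk s t u (p ++ q) w := by
  induction h1 with
  | nil => simpa using h2
  | cons hs _ ih => exact ArcWalk.cons hs (ih h2)

lemma arcwalk_snoc {u w : V} {a : A} {p : List A} :
    ArcWalk s t u (p ++ [a]) w ↔ (ArcWalk s t u p (s a) ∧ t a = w) := by
  constructor
  · induction p generalizing u with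
    | nil =>
      intro h
      cases h with
      | cons hs h' =>
        cases h'
        subst hs
        exact ⟨ArcWalk.nil _, rfl⟩
    | cons b q ih =>
      intro h
      cases h with
      | cons hs h' =>
        obtain ⟨h1, h2⟩ := ih h'
        exact ⟨ArcWalk.cons hs h1, h2⟩
  · rintro ⟨h1, rfl⟩
    exact arcwalk_append h1 (ArcWalk.cons rfl (ArcWalk.nil _))

lemma wf_walk_rel [Finite V]
    (acyc : ∀ (v : V) (p : List A), p ≠ [] → ¬ ArcWalk s t v p v) :
    WellFounded (fun u v : V => ∃ p : List A, p ≠ [] ∧ ArcWalk s t u p v) := by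
  haveI : IsTrans V (fun u v : V => ∃ p : List A, p ≠ [] ∧ ArcWalk s t u p v) :=
    ⟨by rintro a b c ⟨p, hp, hw⟩ ⟨q, hq, hw'⟩
        exact ⟨p ++ q, by simp [hp], arcwalk_append hw hw'⟩⟩
  haveI : IsIrrefl V (fun u v : V => ∃ p : List A, p ≠ [] ∧ ArcWalk s t u p v) :=
    ⟨by rintro a ⟨p, hp, hw⟩; exact acyc a p hp hw⟩
  exact Finite.wellFounded_of_trans_of_irrefl _

end AuxWalk

/-- A subset `S ⊆ A` is admissible iff it is a support tree for `N`;
consequently `N` is tree-based iff there is an admissible subset, and the identity map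
is a bijection between admissible subsets and support trees. -/
theorem statement_0 {X : Type u1} {V : Type u2} {A : Type u3} (N : PhyloNetwork X V A) :
    (∀ S : Set A, N.Admissible S ↔ N.IsSupportTree S) ∧
    (N.TreeBased ↔ ∃ S : Set A, N.Admissible S) ∧
    Set.BijOn (id : Set A → Set A)
      {S : Set A | N.Admissible S} {S : Set A | N.IsSupportTree S} := by
  haveI := N.finA
  haveI := N.finV
  -- main equivalence
  have main : ∀ S : Set A, N.Admissible S ↔ N.IsSupportTree S := by
    intro S
    constructor
    · rintro ⟨hS1, hC1, hC2⟩
      -- Lemma A: every non-root vertex has exactly one incoming S-arc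
      have lemA : ∀ v : V, v ≠ N.root → ∃! a : A, a ∈ S ∧ N.tgt a = v := by
        intro v hv
        have hdeg : InDeg N.tgt v = 1 ∨ InDeg N.tgt v = 2 := by
          by_cases hl : ∃ x : X, N.leafEmb x = v
          · obtain ⟨x, rfl⟩ := hl
            exact Or.inl (N.leaf_indeg x)
          · rcases N.deg_other v hv hl with ⟨h, _⟩ | ⟨h, _⟩
            · exact Or.inr h
            · exact Or.inl h
        rcases hdeg with h1 | h2
        · obtain ⟨a₀, ha₀⟩ := Set.ncard_eq_one.mp h1
          have hmem : N.tgt a₀ = v := by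
            have : a₀ ∈ ({a : A | N.tgt a = v}) := by rw [ha₀]; rfl
            exact this
          have haS : a₀ ∈ S := by
            apply hS1
            right
            rw [hmem]; exact h1
          refine ⟨a₀, ⟨haS, hmem⟩, ?_⟩
          rintro b ⟨-, hb⟩
          have : b ∈ ({a : A | N.tgt a = v}) := hb
          rw [ha₀] at this
          exact this
        · exact hC1 v h2
      -- Lemma B: droop condition
      have lemB : ∀ v : V, OutDegIn N.src S v = 0 ↔ v ∈ N.leaves := by
        intro v
        constructor
        · intro h0
          by_contra hv
          have hne : ¬ (∃ x : X, N.leafEmb x = v) := by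
            simpa [PhyloNetwork.leaves, Set.mem_range] using hv
          have hout : OutDeg N.src v = 1 ∨ OutDeg N.src v = 2 := by
            by_cases hr : v = N.root
            · subst hr; exact N.root_outdeg
            · rcases N.deg_other v hr hne with ⟨_, h⟩ | ⟨_, h⟩
              · exact Or.inl h
              · exact Or.inr h
          have hex : ∃ a ∈ S, N.src a = v := by
            rcases hout with h1 | h2
            · obtain ⟨a₀, ha₀⟩ := Set.ncard_eq_one.mp h1
              have hmem : N.src a₀ = v := by
                have : a₀ ∈ ({a : A | N.src a = v}) := by rw [ha₀]; rfl
                exact this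
              refine ⟨a₀, ?_, hmem⟩
              apply hS1
              left
              rw [hmem]; exact h1
            · exact hC2 v h2
          obtain ⟨a, ha, hav⟩ := hex
          have : ({a : A | a ∈ S ∧ N.src a = v} : Set A) = ∅ :=
            (Set.ncard_eq_zero (Set.toFinite _)).mp h0
          exact absurd (Set.eq_empty_iff_forall_notMem.mp this a ⟨ha, hav⟩) (by simp)
        · intro hv
          have h0 : OutDeg N.src v = 0 := (N.leaf_iff v).mp (by
            simpa [PhyloNetwork.leaves, Set.mem_range] using hv)
          have hempty : ({a : A | N.src a = v} : Set A) = ∅ := (Set.ncard_eq_zero (Set.toFinite _)).mp h0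
          have : ({a : A | a ∈ S ∧ N.src a = v} : Set A) = ∅ := by
            apply Set.eq_empty_iff_forall_notMem.mpr
            intro a ⟨_, ha⟩
            exact Set.eq_empty_iff_forall_notMem.mp hempty a ha
          rw [OutDegIn, this, Set.ncard_empty]
      -- rooted tree
      have key : ∀ v : V, ∃! p : List A, (∀ a ∈ p, a ∈ S) ∧ ArcWalk N.src N.tgt N.root p v := by
        have wf := wf_walk_rel (s := N.src) (t := N.tgt) N.acyclic
        intro v
        induction v using wf.induction with
        | _ v ih =>
          by_cases hv : v = N.root
          · subst hv
            refine ⟨[], ⟨by simp, ArcWalk.nil _⟩, ?_⟩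
            rintro p ⟨-, hp⟩
            by_contra hne
            exact N.acyclic N.root p hne hp
          · obtain ⟨a, ⟨haS, hav⟩, huniq⟩ := lemA v hv
            have hlt : ∃ p : List A, p ≠ [] ∧ ArcWalk N.src N.tgt (N.src a) p v := by
              refine ⟨[a], by simp, ArcWalk.cons rfl ?_⟩
              rw [hav]; exact ArcWalk.nil _
            obtain ⟨q, ⟨hqS, hqw⟩, hq_uniq⟩ := ih (N.src a) hlt
            refine ⟨q ++ [a], ⟨?_, ?_⟩, ?_⟩
            · intro b hb
              rcases List.mem_append.mp hb with h | h
              · exact hqS b h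
              · simp at h; subst h; exact haS
            · exact arcwalk_snoc.mpr ⟨hqw, hav⟩
            · rintro p ⟨hpS, hpw⟩
              have hpne : p ≠ [] := by
                rintro rfl
                exact hv (arcwalk_nil_eq hpw).symm
              obtain ⟨p', b, hpb⟩ := (List.eq_nil_or_concat p).resolve_left hpne
              rw [List.concat_eq_append] at hpb
              subst hpb
              obtain ⟨hp'w, hbv⟩ := arcwalk_snoc.mp hpw
              have hba : b = a := huniq b ⟨hpS b (by simp), hbv⟩
              subst hba
              have : p' = q := hq_uniq p' ⟨fun c hc => hpS c (by simp [hc]), hp'w⟩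
              rw [this]
      exact ⟨key, lemB⟩
    · rintro ⟨htree, hleaf⟩
      -- helpers
      have into_exists : ∀ v : V, v ≠ N.root → ∃ a ∈ S, N.tgt a = v := by
        intro v hv
        obtain ⟨p, ⟨hpS, hpw⟩, -⟩ := htree v
        have hpne : p ≠ [] := by
          rintro rfl
          exact hv (arcwalk_nil_eq hpw).symm
        obtain ⟨q, a, hqa⟩ := (List.eq_nil_or_concat p).resolve_left hpne
        rw [List.concat_eq_append] at hqa
        subst hqa
        obtain ⟨-, hav⟩ := arcwalk_snoc.mp hpw
        exact ⟨a, hpS a (by simp), hav⟩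
      have into_unique : ∀ a ∈ S, ∀ b ∈ S, N.tgt a = N.tgt b → a = b := by
        intro a ha b hb hab
        obtain ⟨pa, ⟨hpaS, hpaw⟩, -⟩ := htree (N.src a)
        obtain ⟨pb, ⟨hpbS, hpbw⟩, -⟩ := htree (N.src b)
        obtain ⟨p, -, huniq⟩ := htree (N.tgt a)
        have hSa : ∀ c ∈ pa ++ [a], c ∈ S := by
          intro c hc
          rcases List.mem_append.mp hc with h | h
          · exact hpaS c h
          · simp at h; subst h; exact ha
        have hSb : ∀ c ∈ pb ++ [b], c ∈ S := by
          intro c hc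
          rcases List.mem_append.mp hc with h | h
          · exact hpbS c h
          · simp at h; subst h; exact hb
        have h1 : pa ++ [a] = p := huniq (pa ++ [a]) ⟨hSa, arcwalk_snoc.mpr ⟨hpaw, rfl⟩⟩
        have h2 : pb ++ [b] = p := huniq (pb ++ [b]) ⟨hSb, arcwalk_snoc.mpr ⟨hpbw, hab.symm⟩⟩
        have heq := h1.trans h2.symm
        have hsome : some a = some b := by
          rw [← List.getLast?_concat (l := pa), ← List.getLast?_concat (l := pb), heq]
        exact Option.some.inj hsome
      have out_nonempty : ∀ v : V, v ∉ N.leaves → ∃ a ∈ S, N.src a = v := by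
        intro v hv
        have h0 : OutDegIn N.src S v ≠ 0 := fun h => hv ((hleaf v).mp h)
        have : ({a : A | a ∈ S ∧ N.src a = v} : Set A) ≠ ∅ := fun h => by
          rw [OutDegIn, h, Set.ncard_empty] at h0; exact h0 rfl
        obtain ⟨a, ha, hav⟩ := Set.nonempty_iff_ne_empty.mpr this
        exact ⟨a, ha, hav⟩
      refine ⟨?_, ?_, ?_⟩
      · -- S1 ⊆ S
        intro a ha
        rcases ha with h | h
        · -- OutDeg (src a) = 1
          have hnl : N.src a ∉ N.leaves := by
            intro hl
            have : OutDeg N.src (N.src a) = 0 := (N.leaf_iff _).mp (by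
              simpa [PhyloNetwork.leaves, Set.mem_range] using hl)
            omega
          obtain ⟨b, hb, hbv⟩ := out_nonempty (N.src a) hnl
          obtain ⟨a₀, ha₀⟩ := Set.ncard_eq_one.mp h
          have hmem1 : a ∈ ({a₀} : Set A) := by
            rw [← ha₀]; exact rfl
          have hmem2 : b ∈ ({a₀} : Set A) := by
            rw [← ha₀]; exact hbv
          have : a = b := by
            simp only [Set.mem_singleton_iff] at hmem1 hmem2
            rw [hmem1, hmem2]
          rw [this]; exact hb
        · -- InDeg (tgt a) = 1
          have hnr : N.tgt a ≠ N.root := by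
            intro hr
            rw [hr, N.root_indeg] at h
            exact absurd h (by norm_num)
          obtain ⟨b, hb, hbv⟩ := into_exists (N.tgt a) hnr
          obtain ⟨a₀, ha₀⟩ := Set.ncard_eq_one.mp h
          have hmem1 : a ∈ ({a₀} : Set A) := by
            rw [← ha₀]; exact rfl
          have hmem2 : b ∈ ({a₀} : Set A) := by
            rw [← ha₀]; exact hbv
          have : a = b := by
            simp only [Set.mem_singleton_iff] at hmem1 hmem2
            rw [hmem1, hmem2]
          rw [this]; exact hb
      · -- C1
        intro v hv2
        have hnr : v ≠ N.root := by
          intro hr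
          rw [hr, N.root_indeg] at hv2
          exact absurd hv2 (by norm_num)
        obtain ⟨a, ha, hav⟩ := into_exists v hnr
        exact ⟨a, ⟨ha, hav⟩, fun b ⟨hb, hbv⟩ => into_unique b hb a ha (by rw [hbv, hav])⟩
      · -- C2
        intro v hv2
        apply out_nonempty
        intro hl
        have : OutDeg N.src v = 0 := (N.leaf_iff _).mp (by
          simpa [PhyloNetwork.leaves, Set.mem_range] using hl)
        omega
  refine ⟨main, ?_, ?_⟩
  · constructor
    · rintro ⟨S, hS⟩; exact ⟨S, (main S).mpr hS⟩
    · rintro ⟨S, hS⟩; exact ⟨S, (main S).mp hS⟩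
  · refine ⟨?_, ?_, ?_⟩
    · intro S hS; exact (main S).mp hS
    · intro S _ T _ h; simpa using h
    · intro S hS; exact ⟨S, (main S).mpr hS, rfl⟩
end

section
/- For any binary phylogenetic network N over a finite leaf set X, there exists a finite leaf set X⁺ ⊇ X and a tree-based binary phylogenetic network N⁺ over X⁺ such that N is obtained from N⁺ by deleting all vertices and arcs of N⁺ that do not lie on a directed path ending at a leaf in X, and then suppressing every resulting vertex of in-degree 1 and out-degree 1 (i.e., N = N⁺|X). -/
/-! Directed multigraphs, walks, and binary phylogenetic networks
(following Francis & Steel, "Which phylogenetic networks are merely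
trees with additional arcs?"). -/

universe u1 u2 u3 u4 u5 u6 u7

/-! Subdivide every arc `a = (u, v)` of `N` by a vertex `mid a` and hang a new leaf `new a`
from it. The resulting network `N⁺` is tree-based: every vertex `v ≠ ρ` of `N` keeps one
incoming arc `mid a → v`, every subdivision vertex keeps its unique incoming arc and has its
pendant leaf as a child, so the remaining arcs form a spanning tree whose leaves are exactly the
leaves of `N⁺`. Every vertex of `N⁺` except the new leaves lies above a leaf of `N`, so
restricting `N⁺` to `X` deletes only the new leaves, and suppressing the subdivision vertices
gives back `N`. The network `N⁺` has to live in `Type`, so `N` is first relabelled along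
`Shrink`. -/

section Digraph

variable {V A : Type*} {s t : A → V}

def Acyclic (s t : A → V) : Prop :=
  ∀ (v : V) (p : List A), p ≠ [] → ¬ ArcWalk s t v p v

namespace ArcWalk

variable {u v w : V} {p q : List A}

theorem append (hp : ArcWalk s t u p v) (hq : ArcWalk s t v q w) :
    ArcWalk s t u (p ++ q) w := by
  induction hp with
  | nil => exact hq
  | cons hs _ ih => exact .cons hs (ih hq)

theorem singleton (a : A) : ArcWalk s t (s a) [a] (t a) := .cons rfl (.nil _)

theorem eq_of_nil (h : ArcWalk s t u [] v) : u = v := by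
  cases h; rfl

theorem exists_eq_concat (h : ArcWalk s t u p w) (hp : p ≠ []) :
    ∃ q a, p = q ++ [a] ∧ t a = w ∧ ArcWalk s t u q (s a) := by
  induction h with
  | nil => exact absurd rfl hp
  | @cons u' w' a p' hs h ih =>
    rcases eq_or_ne p' [] with rfl | hne
    · cases h
      exact ⟨[], a, rfl, rfl, hs ▸ .nil _⟩
    · obtain ⟨q, b, rfl, hb, hq⟩ := ih hne
      exact ⟨a :: q, b, rfl, hb, .cons hs hq⟩

theorem map {V' A' : Type*} {s' t' : A' → V'} {f : A → A'} {g : V → V'}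
    (hs : ∀ a, s' (f a) = g (s a)) (ht : ∀ a, t' (f a) = g (t a))
    (h : ArcWalk s t u p v) : ArcWalk s' t' (g u) (p.map f) (g v) := by
  induction h with
  | nil => exact .nil _
  | cons hsa _ ih => exact .cons (by rw [hs, hsa]) (by rw [ht]; exact ih)

theorem potential_le {β : Type*} [Preorder β] {H : V → β} (hH : ∀ a, H (s a) < H (t a))
    (h : ArcWalk s t u p v) : H u ≤ H v := by
  induction h with
  | nil => exact le_rfl
  | cons hs _ ih => exact hs ▸ (hH _).le.trans ih

theorem potential_lt {β : Type*} [Preorder β] {H : V → β} (hH : ∀ a, H (s a) < H (t a))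
    (h : ArcWalk s t u p v) (hp : p ≠ []) : H u < H v := by
  cases h with
  | nil => exact absurd rfl hp
  | cons hs h => exact hs ▸ (hH _).trans_le (h.potential_le hH)

theorem exists_of_transGen (h : Relation.TransGen (fun x y => ∃ a, s a = x ∧ t a = y) u v) :
    ∃ p, p ≠ [] ∧ ArcWalk s t u p v := by
  induction h with
  | single h =>
    obtain ⟨a, rfl, rfl⟩ := h
    exact ⟨[a], by simp, singleton a⟩
  | tail _ h ih =>
    obtain ⟨a, rfl, rfl⟩ := h
    obtain ⟨p, -, hp⟩ := ih
    exact ⟨p ++ [a], by simp, hp.append (singleton a)⟩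

end ArcWalk

theorem acyclic_of_potential {β : Type*} [Preorder β] (H : V → β)
    (hH : ∀ a, H (s a) < H (t a)) : Acyclic s t :=
  fun _ _ hp h => lt_irrefl _ (h.potential_lt hH hp)

theorem wellFounded_of_not_transGen_self {α : Type*} [Finite α] {r : α → α → Prop}
    (h : ∀ a, ¬ Relation.TransGen r a a) : WellFounded r :=
  have : IsTrans α (Relation.TransGen r) := ⟨fun _ _ _ => .trans⟩
  have : Std.Irrefl (Relation.TransGen r) := ⟨h⟩
  Subrelation.wf Relation.TransGen.single (Finite.wellFounded_of_trans_of_irrefl _)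

namespace Acyclic

variable [Finite V]

theorem wellFounded (hac : Acyclic s t) : WellFounded (fun u v => ∃ a, s a = u ∧ t a = v) :=
  wellFounded_of_not_transGen_self fun v hv =>
    let ⟨p, hp, h⟩ := ArcWalk.exists_of_transGen hv
    hac v p hp h

theorem wellFounded_swap (hac : Acyclic s t) :
    WellFounded (fun v u => ∃ a, s a = u ∧ t a = v) :=
  wellFounded_of_not_transGen_self fun v hv =>
    let ⟨p, hp, h⟩ := ArcWalk.exists_of_transGen (Relation.TransGen.swap _ _ hv)
    hac v p hp h

/-- Walks are unique because each is forced backwards, arc by arc, from its endpoint. -/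
theorem isRootedTree (hac : Acyclic s t) {S : Set A} {r : V}
    (hin : ∀ v ≠ r, ∃! a, a ∈ S ∧ t a = v) : IsRootedTree s t S r := by
  intro v
  induction v using hac.wellFounded.induction with
  | _ v ih =>
  by_cases hv : v = r
  · subst hv
    refine ⟨[], ⟨by simp, .nil v⟩, fun q ⟨_, hq⟩ => ?_⟩
    by_contra hne
    exact hac v q hne hq
  · obtain ⟨a, ⟨haS, rfl⟩, ha⟩ := hin _ hv
    obtain ⟨p, ⟨hpS, hp⟩, hpuniq⟩ := ih (s a) ⟨a, rfl, rfl⟩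
    refine ⟨p ++ [a], ⟨fun b hb => ?_, hp.append (.singleton a)⟩, ?_⟩
    · rcases List.mem_append.mp hb with hb | hb
      exacts [hpS b hb, List.mem_singleton.mp hb ▸ haS]
    · rintro q ⟨hqS, hq⟩
      have hne : q ≠ [] := by
        rintro rfl
        exact hv hq.eq_of_nil.symm
      obtain ⟨q', b, rfl, hb, hq'⟩ := hq.exists_eq_concat hne
      obtain rfl := ha b ⟨hqS b (by simp), hb⟩
      rw [hpuniq q' ⟨fun c hc => hqS c (by simp [hc]), hq'⟩]

end Acyclic

theorem inDegIn_eq_inDeg {f : A → V} {A₀ : Set A} {v : V}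
    (h : ∀ a, f a = v → a ∈ A₀) : InDegIn f A₀ v = InDeg f v := by
  unfold InDegIn InDeg
  congr 1
  ext a
  exact ⟨And.right, fun ha => ⟨h a ha, ha⟩⟩

theorem outDegIn_eq_outDeg {f : A → V} {A₀ : Set A} {v : V}
    (h : ∀ a, f a = v → a ∈ A₀) : OutDegIn f A₀ v = OutDeg f v :=
  inDegIn_eq_inDeg h

theorem inDeg_equiv {V' A' : Type*} (f : A → V) (eV : V ≃ V') (eA : A ≃ A') (v : V') :
    InDeg (fun a => eV (f (eA.symm a))) v = InDeg f (eV.symm v) := by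
  unfold InDeg
  rw [← Set.ncard_image_of_injective _ eA.injective]
  congr 1
  ext a
  simp [← Equiv.eq_symm_apply]

theorem outDeg_equiv {V' A' : Type*} (f : A → V) (eV : V ≃ V') (eA : A ≃ A') (v : V') :
    OutDeg (fun a => eV (f (eA.symm a))) v = OutDeg f (eV.symm v) :=
  inDeg_equiv f eV eA v

theorem SubdivOn.comp_equiv {V' A' V'' A'' : Type*} {V₀ : Set V} {A₀ : Set A}
    {s' t' : A' → V'} {φ : V'' → V} (eV : V' ≃ V'') (eA : A' ≃ A'')
    (h : SubdivOn s t V₀ A₀ (fun e => eV (s' (eA.symm e))) (fun e => eV (t' (eA.symm e))) φ) :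
    SubdivOn s t V₀ A₀ s' t' (φ ∘ eV) := by
  obtain ⟨hinj, hmem, hends, hrange, φA, hφA, hpart⟩ := h
  have hφ : Set.range (φ ∘ eV) = Set.range φ := eV.surjective.range_comp φ
  refine ⟨hinj.comp eV.injective, fun v => hmem _, hends, fun v hv => hφ ▸ hrange v hv,
    φA ∘ eA, fun e => ?_, fun a ha => ?_⟩
  · have := hφA (eA e)
    simp only [Equiv.symm_apply_apply] at this
    rwa [hφ]
  · obtain ⟨e, he, huniq⟩ := hpart a ha
    exact ⟨eA.symm e, by simpa using he, fun e' he' => eA.eq_symm_apply.mpr (huniq _ he')⟩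

end Digraph

namespace PhyloNetwork

variable {X V A : Type*}

section Relabel

variable {X' V' A' : Type*}

def relabel (N : PhyloNetwork X V A) (eX : X ≃ X') (eV : V ≃ V') (eA : A ≃ A') :
    PhyloNetwork X' V' A' where
  src a := eV (N.src (eA.symm a))
  tgt a := eV (N.tgt (eA.symm a))
  leafEmb x := eV (N.leafEmb (eX.symm x))
  root := eV N.root
  finV := have := N.finV; .of_equiv V eV
  finA := have := N.finA; .of_equiv A eA
  leafEmb_inj := eV.injective.comp (N.leafEmb_inj.comp eX.symm.injective)
  acyclic v p hp h := N.acyclic _ (p.map eA.symm) (by simpa using hp)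
    (h.map (f := eA.symm) (g := eV.symm) (by simp) (by simp))
  leaf_iff v := by
    rw [outDeg_equiv, ← N.leaf_iff]
    exact ⟨fun ⟨x, hx⟩ => ⟨eX.symm x, by rw [← hx, Equiv.symm_apply_apply]⟩,
      fun ⟨x, hx⟩ => ⟨eX x, by rw [Equiv.symm_apply_apply, hx, Equiv.apply_symm_apply]⟩⟩
  leaf_indeg x := by
    rw [inDeg_equiv, Equiv.symm_apply_apply]
    exact N.leaf_indeg _
  root_indeg := by
    rw [inDeg_equiv, Equiv.symm_apply_apply]
    exact N.root_indeg
  root_unique v h := by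
    rw [inDeg_equiv] at h
    exact eV.symm_apply_eq.mp (N.root_unique _ h)
  root_outdeg := by
    rw [outDeg_equiv, Equiv.symm_apply_apply]
    exact N.root_outdeg
  deg_other v hv hl := by
    rw [inDeg_equiv, outDeg_equiv]
    exact N.deg_other _ (fun h => hv (eV.symm_apply_eq.mp h)) fun ⟨x, hx⟩ =>
      hl ⟨eX x, by rw [Equiv.symm_apply_apply, hx, Equiv.apply_symm_apply]⟩

@[simp] theorem relabel_leafEmb (N : PhyloNetwork X V A) (eX : X ≃ X') (eV : V ≃ V')
    (eA : A ≃ A') (x : X') : (N.relabel eX eV eA).leafEmb x = eV (N.leafEmb (eX.symm x)) :=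
  rfl

end Relabel

variable (N : PhyloNetwork X V A)

theorem not_inDeg_eq_one_and_outDeg_eq_one (u : V) :
    ¬ (InDeg N.tgt u = 1 ∧ OutDeg N.src u = 1) := by
  rintro ⟨hin, hout⟩
  rcases eq_or_ne u N.root with rfl | hr
  · have := N.root_indeg
    omega
  by_cases hl : ∃ x, N.leafEmb x = u
  · have := (N.leaf_iff u).mp hl
    omega
  · rcases N.deg_other u hr hl with ⟨h, -⟩ | ⟨-, h⟩ <;> omega

theorem exists_tgt_eq_of_ne_root {u : V} (hu : u ≠ N.root) : ∃ a, N.tgt a = u := by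
  by_contra! h
  exact hu (N.root_unique u (by simp [InDeg, h]))

theorem exists_src_eq_of_not_leaf {v : V} (hv : ¬ ∃ x, N.leafEmb x = v) :
    ∃ a, N.src a = v := by
  by_contra! h
  exact hv ((N.leaf_iff v).mpr (by simp [OutDeg, h]))

end PhyloNetwork

section Keep

variable {X V A : Type*} {N : PhyloNetwork X V A} {L : Set V}

theorem mem_keepV_of_mem {v : V} (hv : v ∈ L) : v ∈ KeepV N L :=
  ⟨[], v, hv, .nil v⟩

theorem mem_keepA_iff {a : A} : a ∈ KeepA N L ↔ N.tgt a ∈ KeepV N L :=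
  Iff.rfl

theorem src_mem_keepV {a : A} (h : N.tgt a ∈ KeepV N L) : N.src a ∈ KeepV N L :=
  let ⟨p, w, hw, hp⟩ := h
  ⟨a :: p, w, hw, .cons rfl hp⟩

theorem inDegIn_keepA {v : V} (hv : v ∈ KeepV N L) :
    InDegIn N.tgt (KeepA N L) v = InDeg N.tgt v :=
  inDegIn_eq_inDeg fun a ha => by rwa [mem_keepA_iff, ha]

end Keep

inductive PendantVertex (V A : Type*)
  | old (v : V)
  | mid (a : A)
  | new (a : A)

inductive PendantArc (A : Type*)
  | head (a : A)
  | tail (a : A)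
  | pendant (a : A)

instance {V A : Type*} [Finite V] [Finite A] : Finite (PendantVertex V A) :=
  Finite.of_surjective (Sum.elim .old (Sum.elim .mid .new) : V ⊕ A ⊕ A → _) <| by
    rintro (v | a | a)
    exacts [⟨.inl v, rfl⟩, ⟨.inr (.inl a), rfl⟩, ⟨.inr (.inr a), rfl⟩]

instance {A : Type*} [Finite A] : Finite (PendantArc A) :=
  Finite.of_surjective (Sum.elim .head (Sum.elim .tail .pendant) : A ⊕ A ⊕ A → _) <| by
    rintro (a | a | a)
    exacts [⟨.inl a, rfl⟩, ⟨.inr (.inl a), rfl⟩, ⟨.inr (.inr a), rfl⟩]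

namespace PhyloNetwork

variable {X V A : Type*} (N : PhyloNetwork X V A)

@[simp]
def pendantSrc : PendantArc A → PendantVertex V A
  | .head a => .old (N.src a)
  | .tail a => .mid a
  | .pendant a => .mid a

@[simp]
def pendantTgt : PendantArc A → PendantVertex V A
  | .head a => .mid a
  | .tail a => .old (N.tgt a)
  | .pendant a => .new a

@[simp]
def pendantLeaf : X ⊕ A → PendantVertex V A
  | .inl x => .old (N.leafEmb x)
  | .inr a => .new a

theorem inDeg_pendantTgt_old (u : V) : InDeg N.pendantTgt (.old u) = InDeg N.tgt u := by
  unfold InDeg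
  rw [← Set.ncard_image_of_injective {a | N.tgt a = u} fun _ _ => PendantArc.tail.inj]
  congr 1
  ext (a | a | a) <;> simp

theorem inDeg_pendantTgt_mid (a : A) : InDeg N.pendantTgt (.mid a) = 1 := by
  unfold InDeg
  rw [← Set.ncard_singleton (PendantArc.head a)]
  congr 1
  ext (b | b | b) <;> simp

theorem inDeg_pendantTgt_new (a : A) : InDeg N.pendantTgt (.new a) = 1 := by
  unfold InDeg
  rw [← Set.ncard_singleton (PendantArc.pendant a)]
  congr 1
  ext (b | b | b) <;> simp

theorem outDeg_pendantSrc_old (u : V) : OutDeg N.pendantSrc (.old u) = OutDeg N.src u := by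
  unfold OutDeg
  rw [← Set.ncard_image_of_injective {a | N.src a = u} fun _ _ => PendantArc.head.inj]
  congr 1
  ext (a | a | a) <;> simp

theorem outDeg_pendantSrc_mid (a : A) : OutDeg N.pendantSrc (.mid a) = 2 := by
  unfold OutDeg
  rw [← Set.ncard_pair (a := PendantArc.tail a) (b := .pendant a) (by simp)]
  congr 1
  ext (b | b | b) <;> simp [eq_comm]

theorem outDeg_pendantSrc_new (a : A) : OutDeg N.pendantSrc (.new a) = 0 := by
  unfold OutDeg
  rw [← Set.ncard_empty (PendantArc A)]
  congr 1
  ext (b | b | b) <;> simp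

theorem acyclic_pendant : Acyclic N.pendantSrc N.pendantTgt := by
  have := N.finV
  let rank (v : V) : Ordinal := ((Acyclic.wellFounded N.acyclic).apply v).rank
  have hrank (a : A) : rank (N.src a) < rank (N.tgt a) := Acc.rank_lt_of_rel _ ⟨a, rfl, rfl⟩
  let H : PendantVertex V A → Ordinal ×ₗ ℕ
    | .old u => toLex (rank u, 0)
    | .mid a => toLex (rank (N.src a), 1)
    | .new a => toLex (rank (N.src a), 2)
  refine acyclic_of_potential H ?_
  rintro (a | a | a) <;> simp [H, Prod.Lex.toLex_lt_toLex, hrank]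

def pendantExtension : PhyloNetwork (X ⊕ A) (PendantVertex V A) (PendantArc A) where
  src := N.pendantSrc
  tgt := N.pendantTgt
  leafEmb := N.pendantLeaf
  root := .old N.root
  finV := have := N.finV; have := N.finA; inferInstance
  finA := have := N.finA; inferInstance
  leafEmb_inj := by
    rintro (x | a) (y | b) h <;> simp at h
    exacts [congrArg _ (N.leafEmb_inj h), congrArg _ h]
  acyclic := N.acyclic_pendant
  leaf_iff := by
    rintro (u | a | a)
    · rw [outDeg_pendantSrc_old, ← N.leaf_iff]
      simp
    · simp [outDeg_pendantSrc_mid]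
    · simp [outDeg_pendantSrc_new]
  leaf_indeg := by
    rintro (x | a)
    · simpa [inDeg_pendantTgt_old] using N.leaf_indeg x
    · exact N.inDeg_pendantTgt_new a
  root_indeg := by
    rw [inDeg_pendantTgt_old]
    exact N.root_indeg
  root_unique := by
    rintro (u | a | a) h
    · rw [inDeg_pendantTgt_old] at h
      rw [N.root_unique u h]
    · simp [inDeg_pendantTgt_mid] at h
    · simp [inDeg_pendantTgt_new] at h
  root_outdeg := by
    rw [outDeg_pendantSrc_old]
    exact N.root_outdeg
  deg_other := by
    rintro (u | a | a) hr hl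
    · rw [inDeg_pendantTgt_old, outDeg_pendantSrc_old]
      exact N.deg_other u (fun h => hr (h ▸ rfl)) fun ⟨x, hx⟩ => hl ⟨.inl x, by simp [hx]⟩
    · exact .inr ⟨N.inDeg_pendantTgt_mid a, N.outDeg_pendantSrc_mid a⟩
    · exact absurd ⟨.inr a, rfl⟩ hl

@[simp] theorem pendantExtension_src : N.pendantExtension.src = N.pendantSrc := rfl

@[simp] theorem pendantExtension_tgt : N.pendantExtension.tgt = N.pendantTgt := rfl

@[simp] theorem pendantExtension_leafEmb : N.pendantExtension.leafEmb = N.pendantLeaf := rfl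

noncomputable def tgtRep (b : A) : A :=
  @Classical.epsilon A ⟨b⟩ fun a => N.tgt a = N.tgt b

theorem tgt_tgtRep (b : A) : N.tgt (N.tgtRep b) = N.tgt b :=
  Classical.epsilon_spec (p := fun a => N.tgt a = N.tgt b) ⟨b, rfl⟩

theorem tgtRep_congr {b c : A} (h : N.tgt b = N.tgt c) : N.tgtRep b = N.tgtRep c := by
  simp only [tgtRep, h]

def IsSupportArc : PendantArc A → Prop
  | .tail b => N.tgtRep b = b
  | _ => True

theorem existsUnique_supportArc (v : PendantVertex V A) (hv : v ≠ .old N.root) :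
    ∃! e, e ∈ {e | N.IsSupportArc e} ∧ N.pendantTgt e = v := by
  rcases v with u | a | a
  · obtain ⟨c, rfl⟩ := N.exists_tgt_eq_of_ne_root fun h => hv (h ▸ rfl)
    refine ⟨.tail (N.tgtRep c), ⟨N.tgtRep_congr (N.tgt_tgtRep c), by simp [tgt_tgtRep]⟩, ?_⟩
    rintro (b | b | b) ⟨hb, hbc⟩ <;> simp only [pendantTgt, reduceCtorEq] at hbc
    rw [← N.tgtRep_congr (PendantVertex.old.inj hbc), hb]
  · refine ⟨.head a, ⟨trivial, rfl⟩, ?_⟩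
    rintro (b | b | b) ⟨-, hb⟩ <;> simp_all
  · refine ⟨.pendant a, ⟨trivial, rfl⟩, ?_⟩
    rintro (b | b | b) ⟨-, hb⟩ <;> simp_all

theorem outDegIn_supportArc_eq_zero_iff (v : PendantVertex V A) :
    OutDegIn N.pendantSrc {e | N.IsSupportArc e} v = 0 ↔ v ∈ N.pendantExtension.leaves := by
  have := N.finA
  rcases v with u | a | a
  · rw [outDegIn_eq_outDeg (by rintro (b | b | b) h <;> simp_all [IsSupportArc])]
    exact (N.pendantExtension.leaf_iff _).symm
  · refine ⟨fun h => absurd h (Set.ncard_ne_zero_of_mem (a := .pendant a) ⟨trivial, rfl⟩),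
      ?_⟩
    rintro ⟨x | b, hx⟩ <;> simp at hx
  · rw [outDegIn_eq_outDeg (by rintro (b | b | b) h <;> simp_all)]
    exact (N.pendantExtension.leaf_iff _).symm

theorem pendantExtension_treeBased : N.pendantExtension.TreeBased :=
  have := N.finV
  have := N.finA
  ⟨{e | N.IsSupportArc e},
    Acyclic.isRootedTree N.acyclic_pendant N.existsUnique_supportArc,
    N.outDegIn_supportArc_eq_zero_iff⟩

section Restriction

variable {N} {L : Set (PendantVertex V A)}

theorem old_mem_keepV_pendant (hL : ∀ x, .old (N.leafEmb x) ∈ L) (u : V) :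
    .old u ∈ KeepV N.pendantExtension L := by
  have := N.finV
  induction u using (Acyclic.wellFounded_swap N.acyclic).induction with
  | _ u ih =>
  by_cases hu : ∃ x, N.leafEmb x = u
  · obtain ⟨x, rfl⟩ := hu
    exact mem_keepV_of_mem (hL x)
  · obtain ⟨a, rfl⟩ := N.exists_src_eq_of_not_leaf hu
    have hmid := src_mem_keepV (a := PendantArc.tail a) (ih _ ⟨a, rfl, rfl⟩)
    exact src_mem_keepV (a := PendantArc.head a) hmid

theorem mid_mem_keepV_pendant (hL : ∀ x, .old (N.leafEmb x) ∈ L) (a : A) :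
    .mid a ∈ KeepV N.pendantExtension L :=
  src_mem_keepV (a := PendantArc.tail a) (old_mem_keepV_pendant hL _)

theorem new_not_mem_keepV_pendant (hL : ∀ a, .new a ∉ L) (a : A) :
    .new a ∉ KeepV N.pendantExtension L := by
  rintro ⟨p, w, hw, hp⟩
  cases hp with
  | nil => exact hL a hw
  | @cons _ _ e _ hs _ => cases e <;> cases hs

theorem outDegIn_keepA_pendant_mid (hL : ∀ x, .old (N.leafEmb x) ∈ L)
    (hL' : ∀ a, .new a ∉ L) (a : A) :
    OutDegIn N.pendantExtension.src (KeepA N.pendantExtension L) (.mid a) = 1 := by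
  unfold OutDegIn
  rw [← Set.ncard_singleton (PendantArc.tail a)]
  congr 1
  ext (b | b | b) <;>
    simp [mem_keepA_iff, old_mem_keepV_pendant hL, new_not_mem_keepV_pendant hL']

theorem subdivOn_pendantExtension (hL : ∀ x, .old (N.leafEmb x) ∈ L)
    (hL' : ∀ a, .new a ∉ L) :
    SubdivOn N.pendantExtension.src N.pendantExtension.tgt (KeepV N.pendantExtension L)
      (KeepA N.pendantExtension L) N.src N.tgt .old := by
  have hkeep : ∀ e, e ∈ KeepA N.pendantExtension L ↔ ∀ a, e ≠ .pendant a := by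
    rintro (a | a | a) <;>
      simp [mem_keepA_iff, old_mem_keepV_pendant hL,
        mid_mem_keepV_pendant hL, new_not_mem_keepV_pendant hL']
  refine ⟨fun _ _ => PendantVertex.old.inj, old_mem_keepV_pendant hL,
    fun e he => ⟨src_mem_keepV he, he⟩, ?_, fun a => [PendantArc.head a, .tail a],
    fun a => ?_, ?_⟩
  · rintro (u | a | a) hv
    · have hout : ∀ e, N.pendantExtension.src e = .old u → e ∈ KeepA N.pendantExtension L :=
        fun e he => (hkeep e).mpr (by rintro b rfl; simp at he)
      rw [inDegIn_keepA hv, outDegIn_eq_outDeg hout]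
      simpa [inDeg_pendantTgt_old, outDeg_pendantSrc_old] using
        N.not_inDeg_eq_one_and_outDeg_eq_one u
    · rw [inDegIn_keepA hv, outDegIn_keepA_pendant_mid hL hL']
      simpa using N.inDeg_pendantTgt_mid a
    · exact absurd hv (new_not_mem_keepV_pendant hL' a)
  · refine ⟨by simp, by simp, by simp [hkeep], .cons rfl (.cons rfl (.nil _)), by simp⟩
  · rintro (b | b | b) hb
    · exact ⟨b, by simp, fun c hc => (by simpa using hc : b = c).symm⟩
    · exact ⟨b, by simp, fun c hc => (by simpa using hc : b = c).symm⟩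
    · exact absurd rfl ((hkeep _).mp hb b)

end Restriction

end PhyloNetwork

/-- Every binary phylogenetic network `N` over `X` is the restriction
`N⁺|X` of some tree-based binary phylogenetic network `N⁺` over a larger leaf set
`X⁺ ⊇ X`: deleting from `N⁺` all vertices and arcs not lying on a directed path
ending at a leaf in `X`, and suppressing all resulting in-degree-1 out-degree-1
vertices, yields exactly `N`. -/
theorem statement_2 {X : Type u1} {V : Type u2} {A : Type u3} (N : PhyloNetwork X V A) :
    ∃ (Xp Vp Ap : Type) (j : X → Xp) (Np : PhyloNetwork Xp Vp Ap),
      Function.Injective j ∧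
      Np.TreeBased ∧
      ∃ φV : V → Vp,
        SubdivOn Np.src Np.tgt
          (KeepV Np {v : Vp | ∃ x : X, v = Np.leafEmb (j x)})
          (KeepA Np {v : Vp | ∃ x : X, v = Np.leafEmb (j x)})
          N.src N.tgt φV ∧
        φV N.root = Np.root ∧
        (∀ x : X, φV (N.leafEmb x) = Np.leafEmb (j x)) := by
  have := N.finV
  have := N.finA
  have : Finite X := .of_injective _ N.leafEmb_inj
  let eX := equivShrink.{0} X
  let eV := equivShrink.{0} V
  let N' := N.relabel eX eV (equivShrink.{0} A)
  refine ⟨_, _, _, Sum.inl ∘ eX, N'.pendantExtension, Sum.inl_injective.comp eX.injective,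
    N'.pendantExtension_treeBased, .old ∘ eV, ?_, rfl, fun x => ?_⟩
  · refine SubdivOn.comp_equiv eV (equivShrink.{0} A) (N'.subdivOn_pendantExtension ?_ ?_)
    · exact fun x => ⟨eX.symm x, by simp [N']⟩
    · rintro a ⟨x, hx⟩
      simp at hx
  · simp [N']
end

section
/- Let N = (V, A) be a binary phylogenetic network over a finite leaf set X with root ρ. Then N is tree-based if and only if N has a rooted spanning tree with root ρ that contains every arc of S₁ and all of whose vertices of out-degree 0 lie in X. -/
/-! Directed multigraphs, walks, and binary phylogenetic networks
(following Francis & Steel, "Which phylogenetic networks are merely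
trees with additional arcs?"). -/

universe u1 u2 u3 u4 u5 u6 u7

/-- `N` is tree-based iff `N` has a rooted spanning tree with root `ρ`
containing every arc of `S₁` and all of whose out-degree-0 vertices lie in `X`. -/
theorem statement_4 {X : Type u1} {V : Type u2} {A : Type u3} (N : PhyloNetwork X V A) :
    N.TreeBased ↔
      ∃ S : Set A, IsRootedTree N.src N.tgt S N.root ∧ N.S1 ⊆ S ∧
        ∀ v : V, OutDegIn N.src S v = 0 → v ∈ N.leaves := by
  have := N.finA
  have := N.finV
  constructor
  · rintro ⟨S, hTree, hLeaf⟩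
    refine ⟨S, hTree, ?_, fun v hv => (hLeaf v).1 hv⟩
    intro a ha
    rcases ha with h1 | h2
    · -- OutDeg (src a) = 1
      set u := N.src a with hu
      -- u is not a leaf
      have hnl : u ∉ N.leaves := by
        intro hul
        rcases hul with ⟨x, hx⟩
        have h0 : OutDeg N.src u = 0 := (N.leaf_iff u).1 ⟨x, hx⟩
        have : a ∈ {c : A | N.src c = u} := rfl
        have hne : ({c : A | N.src c = u}).Nonempty := ⟨a, this⟩
        have := Set.ncard_eq_zero (Set.toFinite _) |>.1 h0
        rw [this] at hne
        exact Set.not_nonempty_empty hne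
      have hS0 : OutDegIn N.src S u ≠ 0 := fun h => hnl ((hLeaf u).1 h)
      have hne : ({c : A | c ∈ S ∧ N.src c = u}).Nonempty := by
        by_contra h
        exact hS0 (by
          unfold OutDegIn
          rw [Set.not_nonempty_iff_eq_empty.1 h, Set.ncard_empty])
      rcases hne with ⟨b, hbS, hbu⟩
      rcases Set.ncard_eq_one.1 h1 with ⟨c, hc⟩
      have hac : a ∈ {x : A | N.src x = N.src a} := rfl
      have hbc : b ∈ {x : A | N.src x = N.src a} := hbu
      rw [hc] at hac hbc
      rw [show a = c from hac, ← show b = c from hbc]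
      exact hbS
    · -- InDeg (tgt a) = 1
      set v := N.tgt a with hv
      have hvr : v ≠ N.root := by
        intro h
        rw [h] at h2
        rw [N.root_indeg] at h2
        exact one_ne_zero h2.symm
      obtain ⟨p, ⟨hpS, hpw⟩, _⟩ := hTree v
      have hpne : p ≠ [] := by
        intro h
        subst h
        have hnil : ∀ {u w : V}, ArcWalk N.src N.tgt u ([] : List A) w → u = w := by
          intro u w h; cases h; rfl
        exact hvr (hnil hpw).symm
      -- last arc of p has target v and is in S
      have hlast : ∀ {u w : V} {p : List A}, ArcWalk N.src N.tgt u p w →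
          ∀ h : p ≠ [], N.tgt (p.getLast h) = w := by
        intro u w p hw
        induction hw with
        | nil w => intro h; exact absurd rfl h
        | @cons u' w' a' p' hs hw ih =>
          intro h
          cases p' with
          | nil => cases hw; simp
          | cons b q =>
            rw [List.getLast_cons (by simp)]
            exact ih (by simp)
      set b := p.getLast hpne with hb
      have hbS : b ∈ S := hpS _ (List.getLast_mem hpne)
      have hbt : N.tgt b = v := hlast hpw hpne
      rcases Set.ncard_eq_one.1 h2 with ⟨c, hc⟩
      have hac : a ∈ {x : A | N.tgt x = N.tgt a} := rfl
      have hbc : b ∈ {x : A | N.tgt x = N.tgt a} := hbt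
      rw [hc] at hac hbc
      rw [show a = c from hac, ← show b = c from hbc]
      exact hbS
  · rintro ⟨S, hTree, hS1, hOut⟩
    refine ⟨S, hTree, fun v => ⟨hOut v, ?_⟩⟩
    intro hvl
    have h0 : OutDeg N.src v = 0 := (N.leaf_iff v).1 hvl
    have hsub : {c : A | c ∈ S ∧ N.src c = v} ⊆ {c : A | N.src c = v} := fun c hc => hc.2
    have := Set.ncard_le_ncard hsub (Set.toFinite _)
    unfold OutDeg at h0
    unfold OutDegIn
    omega
end

section
/- If a binary phylogenetic network N over a finite leaf set X is tree-based, then N satisfies the antichain-to-leaf property: for every antichain 𝒜 of N consisting of non-leaf vertices, there exists a family of directed paths (p_v)_{v ∈ 𝒜}, where p_v runs from v to some leaf in X, that are pairwise arc-disjoint. -/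
/-! Directed multigraphs, walks, and binary phylogenetic networks
(following Francis & Steel, "Which phylogenetic networks are merely
trees with additional arcs?"). -/

universe u1 u2 u3 u4 u5 u6 u7

section WalkLemmas

variable {V : Type u2} {A : Type u3} {s t : A → V}

lemma walk_end_unique {x y z : V} {p : List A} (h1 : ArcWalk s t x p y)
    (h2 : ArcWalk s t x p z) : y = z := by
  induction p generalizing x with
  | nil => cases h1; cases h2; rfl
  | cons a p ih =>
    cases h1 with
    | cons hs1 h1 =>
      cases h2 with
      | cons hs2 h2 => exact ih h1 h2

lemma walk_append {x y z : V} {p q : List A} (h1 : ArcWalk s t x p y)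
    (h2 : ArcWalk s t y q z) : ArcWalk s t x (p ++ q) z := by
  induction p generalizing x with
  | nil => cases h1; simpa
  | cons a p ih =>
    cases h1 with
    | cons hs h1 => exact ArcWalk.cons hs (ih h1)

lemma walk_split {x z : V} {p q : List A} (h : ArcWalk s t x (p ++ q) z) :
    ∃ y, ArcWalk s t x p y ∧ ArcWalk s t y q z := by
  induction p generalizing x with
  | nil => exact ⟨x, ArcWalk.nil x, h⟩
  | cons a p ih =>
    cases h with
    | cons hs h =>
      obtain ⟨y, h1, h2⟩ := ih h
      exact ⟨y, ArcWalk.cons hs h1, h2⟩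

lemma walk_mem_split {x y : V} {p : List A} {a : A} (h : ArcWalk s t x p y)
    (ha : a ∈ p) : ∃ q r, p = q ++ a :: r ∧ ArcWalk s t x q (s a) := by
  induction p generalizing x with
  | nil => simp at ha
  | cons b p ih =>
    cases h with
    | cons hs hw =>
      rcases List.mem_cons.1 ha with rfl | ha
      · subst hs; exact ⟨[], p, rfl, ArcWalk.nil _⟩
      · obtain ⟨q, r, rfl, hq⟩ := ih hw ha
        exact ⟨b :: q, r, rfl, ArcWalk.cons hs hq⟩

end WalkLemmas

/-- A tree-based network satisfies the antichain-to-leaf property: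
for every antichain of non-leaf vertices there is a family of pairwise arc-disjoint
directed paths from its members to leaves. -/
theorem statement_6 {X : Type u1} {V : Type u2} {A : Type u3} (N : PhyloNetwork X V A)
    (h : N.TreeBased) : N.AntichainToLeaf := by
  obtain ⟨S, hTree, hLeaf⟩ := h
  have finV := N.finV
  have finA := N.finA
  choose R hRS hRwalk using fun v => (hTree v).exists
  have hRuniq : ∀ (v : V) (q : List A), (∀ a ∈ q, a ∈ S) →
      ArcWalk N.src N.tgt N.root q v → q = R v :=
    fun v q hq hw => (hTree v).unique ⟨hq, hw⟩ ⟨hRS v, hRwalk v⟩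
  -- depth bound
  have hbound : ∀ v : V, (R v).length < Nat.card V := by
    intro v
    set n := (R v).length with hn
    have hsplit : ∀ i : Fin (n + 1), ∃ y, ArcWalk N.src N.tgt N.root ((R v).take i) y := by
      intro i
      have hw := hRwalk v
      rw [← List.take_append_drop (i : ℕ) (R v)] at hw
      obtain ⟨y, h1, _⟩ := walk_split hw
      exact ⟨y, h1⟩
    choose f hf using hsplit
    have hinj : Function.Injective f := by
      intro i j hij
      have h1 : (R v).take i = (R v).take j :=
        (hTree (f i)).unique
          ⟨fun a ha => hRS v a (List.mem_of_mem_take ha), hf i⟩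
          ⟨fun a ha => hRS v a (List.mem_of_mem_take ha), hij ▸ hf j⟩
      have hlen := congrArg List.length h1
      simp only [List.length_take] at hlen
      have hi : (i : ℕ) ≤ n := Nat.lt_succ_iff.mp i.isLt
      have hj : (j : ℕ) ≤ n := Nat.lt_succ_iff.mp j.isLt
      exact Fin.ext (by omega)
    have hcard := Nat.card_le_card_of_injective f hinj
    simpa using hcard
  -- step lemma
  have hstep : ∀ a ∈ S, R (N.tgt a) = R (N.src a) ++ [a] := by
    intro a ha
    symm
    apply hRuniq
    · intro b hb
      rcases List.mem_append.1 hb with hb | hb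
      · exact hRS _ b hb
      · simp only [List.mem_singleton] at hb; subst hb; exact ha
    · exact walk_append (hRwalk _) (ArcWalk.cons rfl (ArcWalk.nil _))
  -- descent to a leaf
  have hdesc : ∀ (n : ℕ) (v : V), Nat.card V ≤ n + (R v).length →
      ∃ (p : List A) (w : V), w ∈ N.leaves ∧ (∀ a ∈ p, a ∈ S) ∧
        ArcWalk N.src N.tgt v p w := by
    intro n
    induction n with
    | zero => intro v hv; exact absurd hv (by have := hbound v; omega)
    | succ m ih =>
      intro v hv
      by_cases hvleaf : v ∈ N.leaves
      · exact ⟨[], v, hvleaf, by simp, ArcWalk.nil v⟩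
      · have h0 : OutDegIn N.src S v ≠ 0 := fun h0 => hvleaf ((hLeaf v).1 h0)
        have hne : {a : A | a ∈ S ∧ N.src a = v}.Nonempty := by
          by_contra hempty
          apply h0
          unfold OutDegIn
          rw [Set.not_nonempty_iff_eq_empty.1 hempty]
          simp
        obtain ⟨a, haS, hav⟩ := hne
        have hlen : (R (N.tgt a)).length = (R v).length + 1 := by
          rw [hstep a haS, hav]; simp
        obtain ⟨p, w, hw, hpS, hwalk⟩ := ih (N.tgt a) (by omega)
        refine ⟨a :: p, w, hw, ?_, ArcWalk.cons hav hwalk⟩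
        intro b hb
        rcases List.mem_cons.1 hb with rfl | hb
        · exact haS
        · exact hpS b hb
  choose P W hWleaf hPS hPwalk using fun v => hdesc (Nat.card V) v (Nat.le_add_right _ _)
  intro 𝒜 _ hanti
  refine ⟨P, fun v _ => ⟨W v, hWleaf v, hPwalk v⟩, ?_⟩
  have key : ∀ u ∈ 𝒜, ∀ v ∈ 𝒜, u ≠ v → (R u).length ≤ (R v).length →
      ∀ a : A, a ∈ P u → a ∈ P v → False := by
    intro u hu v hv huv hle a hau hav
    obtain ⟨qu, ru, hequ, hwu⟩ := walk_mem_split (hPwalk u) hau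
    obtain ⟨qv, rv, heqv, hwv⟩ := walk_mem_split (hPwalk v) hav
    have hquS : ∀ b ∈ qu, b ∈ S := fun b hb =>
      hPS u b (hequ ▸ List.mem_append_left _ hb)
    have hqvS : ∀ b ∈ qv, b ∈ S := fun b hb =>
      hPS v b (heqv ▸ List.mem_append_left _ hb)
    have h1 : R u ++ qu = R (N.src a) := by
      apply hRuniq
      · intro b hb
        rcases List.mem_append.1 hb with hb | hb
        · exact hRS u b hb
        · exact hquS b hb
      · exact walk_append (hRwalk u) hwu
    have h2 : R v ++ qv = R (N.src a) := by
      apply hRuniq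
      · intro b hb
        rcases List.mem_append.1 hb with hb | hb
        · exact hRS v b hb
        · exact hqvS b hb
      · exact walk_append (hRwalk v) hwv
    have hpre : R u <+: R v := by
      apply List.prefix_of_prefix_length_le (l₃ := R v ++ qv) _ (List.prefix_append _ _) hle
      exact ⟨qu, h1.trans h2.symm⟩
    obtain ⟨m, hm⟩ := hpre
    have hwalkv : ArcWalk N.src N.tgt N.root (R u ++ m) v := hm ▸ hRwalk v
    obtain ⟨y, hy1, hy2⟩ := walk_split hwalkv
    have hyu : y = u := walk_end_unique hy1 (hRwalk u)
    exact hanti u hu v hv huv m (hyu ▸ hy2)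
  intro u hu v hv huv a hau hav
  rcases le_total (R u).length (R v).length with hle | hle
  · exact key u hu v hv huv hle a hau hav
  · exact key v hv u hu huv.symm hle a hav hau
end

section
/- If a binary phylogenetic network N over a finite leaf set X is tree-based, then the largest antichain of N has size exactly |X|; that is, every antichain of N has cardinality at most |X|, and X itself is an antichain of size |X|. In particular, any binary phylogenetic network possessing an antichain of size strictly greater than the number of its leaves is not tree-based. -/
/-! Directed multigraphs, walks, and binary phylogenetic networks
(following Francis & Steel, "Which phylogenetic networks are merely
trees with additional arcs?"). -/

universe u1 u2 u3 u4 u5 u6 u7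

section Aux

variable {V : Type u2} {A : Type u3} {s t : A → V}

lemma arcwalk_det {u v v' : V} {p : List A}
    (h1 : ArcWalk s t u p v) (h2 : ArcWalk s t u p v') : v = v' := by
  induction h1 with
  | nil => exact (arcwalk_nil_eq h2).symm ▸ rfl
  | cons hs _ ih =>
    cases h2 with
    | cons hs' hw' => exact ih hw'

lemma arcwalk_split {u w : V} {p q : List A}
    (h : ArcWalk s t u (p ++ q) w) : ∃ m, ArcWalk s t u p m ∧ ArcWalk s t m q w := by
  induction p generalizing u with
  | nil => exact ⟨u, ArcWalk.nil u, h⟩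
  | cons a p ih =>
    cases h with
    | cons hs hw =>
      obtain ⟨m, hm1, hm2⟩ := ih hw
      exact ⟨m, ArcWalk.cons hs hm1, hm2⟩

lemma transgen_to_walk {w v : V}
    (h : Relation.TransGen (fun w v => ∃ a : A, s a = v ∧ t a = w) w v) :
    ∃ p : List A, p ≠ [] ∧ ArcWalk s t v p w := by
  induction h with
  | single h =>
    obtain ⟨a, ha1, ha2⟩ := h
    exact ⟨[a], by simp, ArcWalk.cons ha1 (ha2 ▸ ArcWalk.nil _)⟩
  | tail _ h2 ih =>
    rename_i b c _
    obtain ⟨a, ha1, ha2⟩ := h2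
    obtain ⟨p, _, hp⟩ := ih
    exact ⟨a :: p, by simp, ArcWalk.cons ha1 (ha2 ▸ hp)⟩

end Aux

namespace PhyloNetwork

variable {X : Type u1} {V : Type u2} {A : Type u3}

lemma exists_leaf_path (N : PhyloNetwork X V A) {S : Set A} (hS : N.IsSupportTree S)
    (v : V) : ∃ (p : List A) (w : V), w ∈ N.leaves ∧ (∀ a ∈ p, a ∈ S) ∧
      ArcWalk N.src N.tgt v p w := by
  haveI := N.finV
  haveI := N.finA
  set rel : V → V → Prop := fun w v => ∃ a : A, N.src a = v ∧ N.tgt a = w with hrel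
  haveI : IsIrrefl V (Relation.TransGen rel) := by
    constructor
    intro v hv
    obtain ⟨p, hne, hp⟩ := transgen_to_walk hv
    exact N.acyclic v p hne hp
  have hwf : WellFounded (Relation.TransGen rel) :=
    Finite.wellFounded_of_trans_of_irrefl _
  induction v using hwf.induction with
  | _ v ih =>
    by_cases hv : OutDegIn N.src S v = 0
    · exact ⟨[], v, (hS.2 v).1 hv, by simp, ArcWalk.nil v⟩
    · have hne : {a : A | a ∈ S ∧ N.src a = v}.Nonempty :=
        Set.nonempty_of_ncard_ne_zero hv
      obtain ⟨a, haS, hav⟩ := hne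
      have hch : Relation.TransGen rel (N.tgt a) v :=
        Relation.TransGen.single ⟨a, hav, rfl⟩
      obtain ⟨p, w, hw, hpS, hp⟩ := ih (N.tgt a) hch
      exact ⟨a :: p, w, hw, by
        intro b hb
        rcases List.mem_cons.1 hb with h | h
        · exact h ▸ haS
        · exact hpS b h, ArcWalk.cons hav hp⟩

end PhyloNetwork

/-- If `N` is tree-based then every antichain has size at most `|X|`;
moreover `X` itself is always an antichain of size `|X|`, so the largest antichain of a
tree-based network has size exactly `|X|`. In particular a network with an antichain
larger than its leaf set is not tree-based. -/
theorem statement_7 {X : Type u1} {V : Type u2} {A : Type u3} (N : PhyloNetwork X V A) :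
    (N.TreeBased → ∀ 𝒜 : Set V, N.IsAntichainIn 𝒜 → 𝒜.ncard ≤ Nat.card X) ∧
    N.IsAntichainIn N.leaves ∧ N.leaves.ncard = Nat.card X ∧
    ((∃ 𝒜 : Set V, N.IsAntichainIn 𝒜 ∧ Nat.card X < 𝒜.ncard) → ¬ N.TreeBased) := by
  haveI := N.finV
  haveI := N.finA
  -- leaves is an antichain
  have hanti : N.IsAntichainIn N.leaves := by
    intro u hu v hv huv p hp
    cases hp with
    | nil => exact huv rfl
    | cons hs hw =>
      rename_i a p'
      obtain ⟨x, hx⟩ := hu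
      have hdeg : OutDeg N.src u = 0 := (N.leaf_iff u).1 ⟨x, hx⟩
      have hemp : {b : A | N.src b = u} = ∅ :=
        (Set.ncard_eq_zero (Set.toFinite _)).1 hdeg
      have : a ∈ {b : A | N.src b = u} := hs
      rw [hemp] at this
      exact this
  -- leaves has cardinality |X|
  have hcard : N.leaves.ncard = Nat.card X := by
    rw [PhyloNetwork.leaves, ← Nat.card_coe_set_eq,
      Nat.card_range_of_injective N.leafEmb_inj]
  -- the bound
  have hbound : N.TreeBased → ∀ 𝒜 : Set V, N.IsAntichainIn 𝒜 → 𝒜.ncard ≤ Nat.card X := by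
    rintro ⟨S, hS⟩ 𝒜 h𝒜
    have hex : ∀ v : V, ∃ w : V, w ∈ N.leaves ∧
        ∃ p : List A, (∀ a ∈ p, a ∈ S) ∧ ArcWalk N.src N.tgt v p w := by
      intro v
      obtain ⟨p, w, hw, hpS, hp⟩ := N.exists_leaf_path hS v
      exact ⟨w, hw, p, hpS, hp⟩
    classical
    set f : V → V := fun v => Classical.choose (hex v) with hf
    have hfl : ∀ v : V, f v ∈ N.leaves := fun v => (Classical.choose_spec (hex v)).1
    have hfw : ∀ v : V, ∃ p : List A, (∀ a ∈ p, a ∈ S) ∧ ArcWalk N.src N.tgt v p (f v) :=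
      fun v => (Classical.choose_spec (hex v)).2
    have hinj : Set.InjOn f 𝒜 := by
      intro u hu v hv hfeq
      by_contra huv
      obtain ⟨p, hpS, hp⟩ := hfw u
      obtain ⟨q, hqS, hq⟩ := hfw v
      obtain ⟨pu, ⟨hpuS, hpu⟩, _⟩ := hS.1 u
      obtain ⟨pv, ⟨hpvS, hpv⟩, _⟩ := hS.1 v
      obtain ⟨pl, ⟨_, _⟩, huniq⟩ := hS.1 (f u)
      have h1 : (∀ a ∈ pu ++ p, a ∈ S) ∧ ArcWalk N.src N.tgt N.root (pu ++ p) (f u) := by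
        constructor
        · intro a ha; rcases List.mem_append.1 ha with h | h
          · exact hpuS a h
          · exact hpS a h
        · exact arcwalk_append hpu hp
      have h2 : (∀ a ∈ pv ++ q, a ∈ S) ∧ ArcWalk N.src N.tgt N.root (pv ++ q) (f u) := by
        constructor
        · intro a ha; rcases List.mem_append.1 ha with h | h
          · exact hpvS a h
          · exact hqS a h
        · exact hfeq ▸ arcwalk_append hpv hq
      have heq : pu ++ p = pv ++ q := (huniq _ h1).trans (huniq _ h2).symm
      rcases List.append_eq_append_iff.1 heq with ⟨r, hr1, _⟩ | ⟨r, hr1, _⟩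
      · -- pv = pu ++ r
        have : ArcWalk N.src N.tgt N.root (pu ++ r) v := hr1 ▸ hpv
        obtain ⟨m, hm1, hm2⟩ := arcwalk_split this
        have hmu : m = u := (arcwalk_det hm1 hpu)
        exact h𝒜 u hu v hv huv r (hmu ▸ hm2)
      · -- pu = pv ++ r
        have : ArcWalk N.src N.tgt N.root (pv ++ r) u := hr1 ▸ hpu
        obtain ⟨m, hm1, hm2⟩ := arcwalk_split this
        have hmv : m = v := (arcwalk_det hm1 hpv)
        exact h𝒜 v hv u hu (Ne.symm huv) r (hmv ▸ hm2)
    calc 𝒜.ncard ≤ N.leaves.ncard :=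
          Set.ncard_le_ncard_of_injOn f (fun v _ => hfl v) hinj (Set.toFinite _)
      _ = Nat.card X := hcard
  refine ⟨hbound, hanti, hcard, ?_⟩
  rintro ⟨𝒜, h𝒜, hlt⟩ hTB
  exact absurd (hbound hTB 𝒜 h𝒜) (not_le.2 hlt)
end
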